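/- Let (H, γ) be a Hermitian symplectic Hilbert space, let U ⊆ H be a closed subspace with Ann(U) := (γ(U))^⊥ contained in U, and let L ⊆ H be a Lagrangian subspace (γ(L) = L^⊥) such that the subspace L + Ann(U) is closed in H. Then: (1) U decomposes as the orthogonal direct sum Ann(U) ⊕ (U ∩ γ(U)); (2) the orthogonal projection of H onto U ∩ γ(U), restricted to L ∩ U, has kernel equal to L ∩ Ann(U) and closed range R_U(L) (hence R_U(L) is isomorphic to (L ∩ U)/(L ∩ Ann(U))); (3) γ(R_U(L)) equals the orthogonal complement of R_U(L) inside U ∩ γ(U), i.e. R_U(L) is a Lagrangian subspace of the Hilbert space U ∩ γ(U); (4) consequently the eigenspaces ker(γ − i) ∩ (U ∩ γU) and ker(γ + i) ∩ (U ∩ γU) of γ restricted to U ∩ γ(U) are isometrically isomorphic, i.e. (U ∩ γ(U), γ) is a Hermitian symplectic Hilbert space. -/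

import Mathlib

/-!
Write `ω(x, y) = ⟪x, γ y⟫`. Since `Ann U ⊆ U` is the `ω`-complement of `U`, the space `U` splits
orthogonally as `Ann U ⊕ (U ∩ γU)`, and the orthogonal projection onto `U ∩ γU` maps `L ∩ U` onto
`R = (L + Ann U) ∩ (U ∩ γU)`, which is closed by hypothesis. `R` is isotropic because it lies in
`(L ∩ U) + Ann U`. It is maximal: if `w ∈ U ∩ γU` is orthogonal to `R`, it is orthogonal to
`L ∩ U ⊆ Ann U + R`, so `γ w` is orthogonal to `γ(L ∩ U) = (L + Ann U)ᗮ` and lies in the closed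
space `L + Ann U`; thus `w = γ(-γ w) ∈ γR`. Finally `U ∩ γU = R ⊕ γR`, on which the reflection in
`R` anticommutes with `γ`, so it maps the `±i`-eigenspaces isometrically onto each other.
-/

open Submodule
open scoped InnerProductSpace

namespace HermitianSymplectic

variable {𝕜 E : Type*} [RCLike 𝕜] [NormedAddCommGroup E] [InnerProductSpace 𝕜 E]

section OrthogonalDecomposition

variable {A W U : Submodule 𝕜 E}

theorem inf_orthogonal_eq_of_sup_eq (h : A ⊔ W = U) (hAW : A ≤ Wᗮ) : U ⊓ Wᗮ = A := by
  rw [← h, sup_inf_assoc_of_le W hAW, inf_orthogonal_eq_bot, sup_bot_eq]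

theorem inf_le_sup_inf_of_sup_eq (h : A ⊔ W = U) (L : Submodule 𝕜 E) :
    L ⊓ U ≤ A ⊔ (L ⊔ A) ⊓ W := by
  rw [inf_comm (L ⊔ A) W, ← sup_inf_assoc_of_le W le_sup_right, h]
  exact le_inf inf_le_right (inf_le_left.trans le_sup_left)

variable [W.HasOrthogonalProjection]

theorem starProjection_eq_zero_iff_of_sup_eq (h : A ⊔ W = U) (hAW : A ≤ Wᗮ) {x : E}
    (hx : x ∈ U) : W.starProjection x = 0 ↔ x ∈ A := by
  rw [starProjection_apply_eq_zero_iff, ← inf_orthogonal_eq_of_sup_eq h hAW, mem_inf]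
  exact ⟨fun hxW => ⟨hx, hxW⟩, And.right⟩

theorem map_starProjection_inf_of_sup_eq (h : A ⊔ W = U) (hAW : A ≤ Wᗮ) (L : Submodule 𝕜 E) :
    (L ⊓ U).map (W.starProjection : E →ₗ[𝕜] E) = (L ⊔ A) ⊓ W := by
  apply le_antisymm
  · rintro _ ⟨x, ⟨hxL, hxU⟩, rfl⟩
    have hxA : x - W.starProjection x ∈ A := by
      rw [← inf_orthogonal_eq_of_sup_eq h hAW]
      exact ⟨U.sub_mem hxU (h ▸ mem_sup_right (W.starProjection_apply_mem x)),
        W.sub_starProjection_mem_orthogonal x⟩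
    refine ⟨?_, W.starProjection_apply_mem x⟩
    rw [ContinuousLinearMap.coe_coe, ← sub_sub_cancel x (W.starProjection x)]
    exact sub_mem (mem_sup_left hxL) (mem_sup_right hxA)
  · rintro r ⟨hr, hrW⟩
    obtain ⟨l, hl, a, ha, rfl⟩ := mem_sup.mp hr
    have hlU : l + a - a ∈ U := U.sub_mem (h ▸ mem_sup_right hrW) (h ▸ mem_sup_left ha)
    rw [add_sub_cancel_right] at hlU
    refine ⟨l, ⟨hl, hlU⟩, ?_⟩
    have hPr := starProjection_eq_self_iff.mpr hrW
    rw [map_add, (starProjection_apply_eq_zero_iff _).mpr (hAW ha), add_zero] at hPr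
    exact hPr

end OrthogonalDecomposition

section Symplectic

def ann (γ : E →L[𝕜] E) (U : Submodule 𝕜 E) : Submodule 𝕜 E :=
  (U.map (γ : E →ₗ[𝕜] E))ᗮ

/-- The paper's `R_U(L)`, the image of `L ∩ U` under the orthogonal projection onto `U ∩ γU`
(`map_starProjection_inf_of_sup_eq`). -/
def reducedLagrangian (γ : E →L[𝕜] E) (U L : Submodule 𝕜 E) : Submodule 𝕜 E :=
  (L ⊔ ann γ U) ⊓ (U ⊓ U.map (γ : E →ₗ[𝕜] E))

variable {γ : E →L[𝕜] E}

theorem mem_map_iff_apply_mem (hγ : ∀ x, γ (γ x) = -x) {U : Submodule 𝕜 E} {x : E} :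
    x ∈ U.map (γ : E →ₗ[𝕜] E) ↔ γ x ∈ U := by
  constructor
  · rintro ⟨u, hu, rfl⟩
    simpa [hγ] using U.neg_mem hu
  · exact fun hx => ⟨-γ x, U.neg_mem hx, by simp [hγ]⟩

theorem isClosed_map (hγ : ∀ x, γ (γ x) = -x) {U : Submodule 𝕜 E} (hU : IsClosed (U : Set E)) :
    IsClosed (U.map (γ : E →ₗ[𝕜] E) : Set E) := by
  have : (U.map (γ : E →ₗ[𝕜] E) : Set E) = γ ⁻¹' U := Set.ext fun _ => mem_map_iff_apply_mem hγ
  exact this ▸ hU.preimage γ.continuous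

theorem map_inf_map_le (hγ : ∀ x, γ (γ x) = -x) (U : Submodule 𝕜 E) :
    (U ⊓ U.map (γ : E →ₗ[𝕜] E)).map (γ : E →ₗ[𝕜] E) ≤ U ⊓ U.map (γ : E →ₗ[𝕜] E) := by
  rintro _ ⟨w, ⟨hwU, hwγU⟩, rfl⟩
  exact ⟨(mem_map_iff_apply_mem hγ).mp hwγU, mem_map_of_mem hwU⟩

theorem map_ann_le_orthogonal (hskew : ∀ x y, ⟪γ x, y⟫_𝕜 = -⟪x, γ y⟫_𝕜) (U : Submodule 𝕜 E) :
    (ann γ U).map (γ : E →ₗ[𝕜] E) ≤ Uᗮ := by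
  rintro _ ⟨a, ha, rfl⟩
  rw [mem_orthogonal]
  intro u hu
  have h : ⟪γ u, a⟫_𝕜 = 0 := inner_right_of_mem_orthogonal (mem_map_of_mem hu) ha
  rw [hskew, neg_eq_zero] at h
  exact h

theorem ann_sup_inf_map [CompleteSpace E] (hγ : ∀ x, γ (γ x) = -x) {U : Submodule 𝕜 E}
    (hU : IsClosed (U : Set E)) (hAnn : ann γ U ≤ U) :
    ann γ U ⊔ (U ⊓ U.map (γ : E →ₗ[𝕜] E)) = U := by
  have : CompleteSpace (U.map (γ : E →ₗ[𝕜] E)) := (isClosed_map hγ hU).completeSpace_coe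
  have h := sup_orthogonal_inf_of_hasOrthogonalProjection (K₁ := (U.map (γ : E →ₗ[𝕜] E))ᗮ) hAnn
  rwa [orthogonal_orthogonal, inf_comm] at h

theorem isOrtho_map_sup_ann (hskew : ∀ x y, ⟪γ x, y⟫_𝕜 = -⟪x, γ y⟫_𝕜) {S U : Submodule 𝕜 E}
    (hS : S.map (γ : E →ₗ[𝕜] E) ⟂ S) (hSU : S ≤ U) (hAnn : ann γ U ≤ U) :
    (S ⊔ ann γ U).map (γ : E →ₗ[𝕜] E) ⟂ S ⊔ ann γ U := by
  have hAU : (ann γ U).map (γ : E →ₗ[𝕜] E) ⟂ U := map_ann_le_orthogonal hskew U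
  rw [Submodule.map_sup, isOrtho_sup_left, isOrtho_sup_right, isOrtho_sup_right]
  exact ⟨⟨hS, (isOrtho_orthogonal_right _).mono_left (map_mono hSU)⟩,
    hAU.mono_right hSU, hAU.mono_right hAnn⟩

theorem map_reducedLagrangian_le (hγ : ∀ x, γ (γ x) = -x)
    (hskew : ∀ x y, ⟪γ x, y⟫_𝕜 = -⟪x, γ y⟫_𝕜) {U L : Submodule 𝕜 E}
    (hLag : L.map (γ : E →ₗ[𝕜] E) = Lᗮ) (hAnn : ann γ U ≤ U) :
    (reducedLagrangian γ U L).map (γ : E →ₗ[𝕜] E) ≤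
      (reducedLagrangian γ U L)ᗮ ⊓ (U ⊓ U.map (γ : E →ₗ[𝕜] E)) := by
  set R := reducedLagrangian γ U L
  have hRW : R ≤ U ⊓ U.map (γ : E →ₗ[𝕜] E) := inf_le_right
  have hR : R ≤ L ⊓ U ⊔ ann γ U :=
    calc R ≤ (L ⊔ ann γ U) ⊓ U := inf_le_inf_left _ inf_le_left
      _ = L ⊓ U ⊔ ann γ U := by rw [sup_comm L, sup_inf_assoc_of_le L hAnn, sup_comm]
  have hLU : (L ⊓ U).map (γ : E →ₗ[𝕜] E) ⟂ L ⊓ U :=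
    ((hLag ▸ isOrtho_orthogonal_left L).mono_left (map_mono inf_le_left)).mono_right inf_le_left
  refine le_inf ?_ ((map_mono hRW).trans (map_inf_map_le hγ U))
  exact ((isOrtho_map_sup_ann hskew hLU inf_le_right hAnn).mono_left (map_mono hR)).mono_right hR

theorem orthogonal_inf_le_map_reducedLagrangian [CompleteSpace E] (hγ : ∀ x, γ (γ x) = -x)
    (hskew : ∀ x y, ⟪γ x, y⟫_𝕜 = -⟪x, γ y⟫_𝕜) {U L : Submodule 𝕜 E}
    (hU : IsClosed (U : Set E)) (hLag : L.map (γ : E →ₗ[𝕜] E) = Lᗮ)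
    (hsum : IsClosed ((L ⊔ ann γ U : Submodule 𝕜 E) : Set E)) (hAnn : ann γ U ≤ U) :
    (reducedLagrangian γ U L)ᗮ ⊓ (U ⊓ U.map (γ : E →ₗ[𝕜] E)) ≤
      (reducedLagrangian γ U L).map (γ : E →ₗ[𝕜] E) := by
  have : CompleteSpace (U.map (γ : E →ₗ[𝕜] E)) := (isClosed_map hγ hU).completeSpace_coe
  have : CompleteSpace (L ⊔ ann γ U : Submodule 𝕜 E) := hsum.completeSpace_coe
  rintro w ⟨hwR, hwW⟩
  have hw : w ∈ (L ⊓ U)ᗮ := by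
    refine orthogonal_le (inf_le_sup_inf_of_sup_eq (ann_sup_inf_map hγ hU hAnn) L) ?_
    rw [← inf_orthogonal]
    exact ⟨le_orthogonal_orthogonal _ hwW.2, hwR⟩
  have hγw : γ w ∈ L ⊔ ann γ U := by
    rw [← orthogonal_orthogonal (L ⊔ ann γ U), ← inf_orthogonal, ann, orthogonal_orthogonal,
      ← hLag, mem_orthogonal]
    rintro _ ⟨⟨l, hl, rfl⟩, hlU⟩
    have hlU' : l ∈ U := by simpa [hγ] using (mem_map_iff_apply_mem hγ).mp hlU
    rw [ContinuousLinearMap.coe_coe, hskew, hγ, inner_neg_right, neg_neg]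
    exact inner_right_of_mem_orthogonal (mem_inf.mpr ⟨hl, hlU'⟩) hw
  exact ⟨-γ w, ⟨neg_mem hγw, neg_mem (map_inf_map_le hγ U (mem_map_of_mem hwW))⟩, by simp [hγ]⟩

end Symplectic

section Reflection

variable {γ : E →L[𝕜] E} {R : Submodule 𝕜 E} [R.HasOrthogonalProjection]

theorem mem_ker_sub_smul_one_iff {c : 𝕜} {v : E} :
    v ∈ LinearMap.ker ((γ - c • 1 : E →L[𝕜] E) : E →ₗ[𝕜] E) ↔ γ v = c • v := by
  simp [sub_eq_zero]

theorem mem_ker_add_smul_one_iff {c : 𝕜} {v : E} :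
    v ∈ LinearMap.ker ((γ + c • 1 : E →L[𝕜] E) : E →ₗ[𝕜] E) ↔ γ v = -c • v := by
  simp [add_eq_zero_iff_eq_neg]

theorem reflection_add_apply (hR : R.map (γ : E →ₗ[𝕜] E) ≤ Rᗮ) {x y : E} (hx : x ∈ R)
    (hy : y ∈ R) : R.reflection (x + γ y) = x - γ y := by
  have hγy : γ y ∈ Rᗮ := hR (mem_map_of_mem hy)
  rw [map_add, reflection_mem_subspace_eq_self hx,
    reflection_mem_subspace_orthogonalComplement_eq_neg hγy, sub_eq_add_neg]

theorem reflection_mem_sup_map (hR : R.map (γ : E →ₗ[𝕜] E) ≤ Rᗮ) {v : E}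
    (hv : v ∈ R ⊔ R.map (γ : E →ₗ[𝕜] E)) : R.reflection v ∈ R ⊔ R.map (γ : E →ₗ[𝕜] E) := by
  obtain ⟨x, hx, _, ⟨y, hy, rfl⟩, rfl⟩ := mem_sup.mp hv
  rw [ContinuousLinearMap.coe_coe, reflection_add_apply hR hx hy, sub_eq_add_neg, ← map_neg]
  exact add_mem (mem_sup_left hx) (mem_sup_right (mem_map_of_mem (neg_mem hy)))

theorem reflection_apply_eq_neg_apply_reflection (hγ : ∀ x, γ (γ x) = -x)
    (hR : R.map (γ : E →ₗ[𝕜] E) ≤ Rᗮ) {v : E} (hv : v ∈ R ⊔ R.map (γ : E →ₗ[𝕜] E)) :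
    R.reflection (γ v) = -γ (R.reflection v) := by
  obtain ⟨x, hx, _, ⟨y, hy, rfl⟩, rfl⟩ := mem_sup.mp hv
  have hγv : γ (x + γ y) = -y + γ x := by rw [map_add, hγ, add_comm]
  rw [ContinuousLinearMap.coe_coe, hγv, reflection_add_apply hR (neg_mem hy) hx,
    reflection_add_apply hR hx hy, map_sub, hγ]
  abel

theorem apply_reflection_eq_neg_smul (hγ : ∀ x, γ (γ x) = -x)
    (hR : R.map (γ : E →ₗ[𝕜] E) ≤ Rᗮ) {c : 𝕜} {v : E} (hv : v ∈ R ⊔ R.map (γ : E →ₗ[𝕜] E))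
    (hcv : γ v = c • v) : γ (R.reflection v) = -c • R.reflection v := by
  rw [← neg_neg (γ _), ← reflection_apply_eq_neg_apply_reflection hγ hR hv, hcv, map_smul,
    neg_smul]

theorem map_reflection_ker_sub_smul_one (hγ : ∀ x, γ (γ x) = -x)
    (hR : R.map (γ : E →ₗ[𝕜] E) ≤ Rᗮ) (c : 𝕜) :
    (LinearMap.ker ((γ - c • 1 : E →L[𝕜] E) : E →ₗ[𝕜] E) ⊓ (R ⊔ R.map (γ : E →ₗ[𝕜] E))).map
        (R.reflection.toLinearEquiv : E →ₗ[𝕜] E) =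
      LinearMap.ker ((γ + c • 1 : E →L[𝕜] E) : E →ₗ[𝕜] E) ⊓ (R ⊔ R.map (γ : E →ₗ[𝕜] E)) := by
  apply le_antisymm
  · rintro _ ⟨v, ⟨hcv, hv⟩, rfl⟩
    rw [SetLike.mem_coe, mem_ker_sub_smul_one_iff] at hcv
    exact ⟨mem_ker_add_smul_one_iff.mpr (apply_reflection_eq_neg_smul hγ hR hv hcv),
      reflection_mem_sup_map hR hv⟩
  · rintro v ⟨hcv, hv⟩
    rw [SetLike.mem_coe, mem_ker_add_smul_one_iff] at hcv
    refine ⟨R.reflection v, ⟨?_, reflection_mem_sup_map hR hv⟩, reflection_reflection R v⟩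
    rw [SetLike.mem_coe, mem_ker_sub_smul_one_iff, ← neg_neg c]
    exact apply_reflection_eq_neg_smul hγ hR hv hcv

theorem nonempty_ker_sub_smul_one_inf_linearIsometryEquiv (hγ : ∀ x, γ (γ x) = -x)
    (hR : R.map (γ : E →ₗ[𝕜] E) ≤ Rᗮ) (c : 𝕜) :
    Nonempty ((LinearMap.ker ((γ - c • 1 : E →L[𝕜] E) : E →ₗ[𝕜] E) ⊓
        (R ⊔ R.map (γ : E →ₗ[𝕜] E)) : Submodule 𝕜 E) ≃ₗᵢ[𝕜]
      (LinearMap.ker ((γ + c • 1 : E →L[𝕜] E) : E →ₗ[𝕜] E) ⊓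
        (R ⊔ R.map (γ : E →ₗ[𝕜] E)) : Submodule 𝕜 E)) :=
  ⟨{ R.reflection.toLinearEquiv.ofSubmodules _ _ (map_reflection_ker_sub_smul_one hγ hR c) with
      norm_map' := fun v => R.reflection.norm_map v }⟩

end Reflection

end HermitianSymplectic

open HermitianSymplectic

theorem statement13 {H : Type*} [NormedAddCommGroup H] [InnerProductSpace ℂ H]
    [CompleteSpace H] (γ : H →L[ℂ] H)
    (hsq : γ ∘L γ = -1) (hadj : ContinuousLinearMap.adjoint γ = -γ)
    (U L : Submodule ℂ H) (hUclosed : IsClosed (U : Set H))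
    (hAnn : (U.map (γ : H →ₗ[ℂ] H))ᗮ ≤ U)
    (hLag : L.map (γ : H →ₗ[ℂ] H) = Lᗮ)
    (hsum : IsClosed ((L ⊔ (U.map (γ : H →ₗ[ℂ] H))ᗮ : Submodule ℂ H) : Set H)) :
    ((U.map (γ : H →ₗ[ℂ] H))ᗮ ⊔ (U ⊓ U.map (γ : H →ₗ[ℂ] H)) = U ∧
      ∀ x ∈ (U.map (γ : H →ₗ[ℂ] H))ᗮ, ∀ y ∈ U ⊓ U.map (γ : H →ₗ[ℂ] H), (inner ℂ x y : ℂ) = 0) ∧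
    (∀ Pr : H →L[ℂ] H,
      (∀ x, Pr x ∈ U ⊓ U.map (γ : H →ₗ[ℂ] H)) → (∀ x, x - Pr x ∈ (U ⊓ U.map (γ : H →ₗ[ℂ] H))ᗮ) →
      ((∀ x ∈ L ⊓ U, (Pr x = 0 ↔ x ∈ L ⊓ (U.map (γ : H →ₗ[ℂ] H))ᗮ)) ∧
       IsClosed (((L ⊓ U).map (Pr : H →ₗ[ℂ] H) : Submodule ℂ H) : Set H) ∧
       ((L ⊓ U).map (Pr : H →ₗ[ℂ] H)).map (γ : H →ₗ[ℂ] H) = ((L ⊓ U).map (Pr : H →ₗ[ℂ] H))ᗮ ⊓ (U ⊓ U.map (γ : H →ₗ[ℂ] H)))) ∧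
    Nonempty
      (((LinearMap.ker ((γ - Complex.I • (1 : H →L[ℂ] H) : H →L[ℂ] H) : H →ₗ[ℂ] H)) ⊓ (U ⊓ U.map (γ : H →ₗ[ℂ] H)) :
          Submodule ℂ H) ≃ₗᵢ[ℂ]
       ((LinearMap.ker ((γ + Complex.I • (1 : H →L[ℂ] H) : H →L[ℂ] H) : H →ₗ[ℂ] H)) ⊓ (U ⊓ U.map (γ : H →ₗ[ℂ] H)) :
          Submodule ℂ H)) := by
  have hγ : ∀ x, γ (γ x) = -x := fun x => by simpa using congr($hsq x)
  have hskew : ∀ x y, ⟪γ x, y⟫_ℂ = -⟪x, γ y⟫_ℂ := fun x y => by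
    rw [← ContinuousLinearMap.adjoint_inner_right, hadj, neg_apply, inner_neg_right]
  set W := U ⊓ U.map (γ : H →ₗ[ℂ] H)
  set R := reducedLagrangian γ U L
  have hWclosed : IsClosed (W : Set H) := hUclosed.inter (isClosed_map hγ hUclosed)
  have hRclosed : IsClosed (R : Set H) := hsum.inter hWclosed
  have : CompleteSpace W := hWclosed.completeSpace_coe
  have : CompleteSpace R := hRclosed.completeSpace_coe
  have hdecomp : ann γ U ⊔ W = U := ann_sup_inf_map hγ hUclosed hAnn
  have hAW : ann γ U ≤ Wᗮ := orthogonal_le inf_le_right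
  have hRLag : R.map (γ : H →ₗ[ℂ] H) = Rᗮ ⊓ W :=
    le_antisymm (map_reducedLagrangian_le hγ hskew hLag hAnn)
      (orthogonal_inf_le_map_reducedLagrangian hγ hskew hUclosed hLag hsum hAnn)
  refine ⟨⟨hdecomp, fun x hx y hy => inner_left_of_mem_orthogonal hy.2 hx⟩,
    fun Pr hPrW hPr_orth => ?_, ?_⟩
  · obtain rfl : Pr = W.starProjection := ContinuousLinearMap.ext fun x =>
      (eq_starProjection_of_mem_orthogonal (hPrW x) (hPr_orth x)).symm
    have hrange : (L ⊓ U).map (W.starProjection : H →ₗ[ℂ] H) = R :=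
      map_starProjection_inf_of_sup_eq hdecomp hAW L
    refine ⟨fun x hx => ?_, by rw [hrange]; exact hRclosed, by rw [hrange]; exact hRLag⟩
    rw [starProjection_eq_zero_iff_of_sup_eq hdecomp hAW hx.2]
    exact ⟨fun hxA => ⟨hx.1, hxA⟩, And.right⟩
  · have hWR : R ⊔ R.map (γ : H →ₗ[ℂ] H) = W := by
      rw [hRLag]
      exact sup_orthogonal_inf_of_hasOrthogonalProjection inf_le_right
    rw [← hWR]
    exact nonempty_ker_sub_smul_one_inf_linearIsometryEquiv hγ (hRLag ▸ inf_le_left) Complex.I
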